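/- If a₁, ..., aₙ, c are n+1 real numbers (n ≥ 2) such that (∑ᵢ aᵢ)² = (n-1)(∑ᵢ aᵢ² + c), then 2a₁a₂ = c if and only if a₁ + a₂ = a₃ = ... = aₙ. -/
import Mathlib


/-- Chen's algebraic lemma (equality case): under the hypothesis
`(∑ᵢ aᵢ)² = (n-1)(∑ᵢ aᵢ² + c)` with `n ≥ 2`, one has `2 a₁ a₂ = c` if and only if
`a₁ + a₂ = a₃ = … = aₙ`. -/
theorem chen_lemma_eq (n : ℕ) (hn : 2 ≤ n) (a : Fin n → ℝ) (c : ℝ)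
    (h : (∑ i, a i) ^ 2 = (n - 1 : ℝ) * ((∑ i, (a i) ^ 2) + c)) :
    2 * a ⟨0, by omega⟩ * a ⟨1, by omega⟩ = c ↔
      ∀ i : Fin n, 2 ≤ (i : ℕ) → a ⟨0, by omega⟩ + a ⟨1, by omega⟩ = a i := by
  set i0 : Fin n := ⟨0, by omega⟩ with hi0def
  set i1 : Fin n := ⟨1, by omega⟩ with hi1def
  set T : Finset (Fin n) := Finset.univ.filter (fun i => 2 ≤ (i : ℕ)) with hT
  have hi1T : i1 ∉ T := by simp [hT, hi1def]
  have hi0T : i0 ∉ insert i1 T := by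
    simp [hT, hi0def, hi1def, Fin.ext_iff]
  have huniv : (Finset.univ : Finset (Fin n)) = insert i0 (insert i1 T) := by
    ext i
    simp [hT, hi0def, hi1def, Fin.ext_iff]
    omega
  have hsum : ∀ f : Fin n → ℝ, ∑ i, f i = f i0 + f i1 + ∑ i ∈ T, f i := by
    intro f
    rw [huniv, Finset.sum_insert hi0T, Finset.sum_insert hi1T]
    ring
  have hcardn : n = T.card + 2 := by
    have h1 : (Finset.univ : Finset (Fin n)).card = n := by simp
    rw [huniv, Finset.card_insert_of_notMem hi0T,
      Finset.card_insert_of_notMem hi1T] at h1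
    omega
  have hcard : (T.card : ℝ) = (n : ℝ) - 2 := by
    have : (n : ℝ) = (T.card : ℝ) + 2 := by exact_mod_cast hcardn
    linarith
  set s : ℝ := a i0 + a i1 with hs
  set ST : ℝ := ∑ i ∈ T, a i with hST
  set QT : ℝ := ∑ i ∈ T, (a i) ^ 2 with hQT
  have E1 : ∑ i ∈ T, (s - a i) ^ 2 = (T.card : ℝ) * s ^ 2 - 2 * s * ST + QT := by
    have : ∀ i ∈ T, (s - a i) ^ 2 = s ^ 2 - 2 * s * a i + a i ^ 2 := by
      intro i _; ring
    rw [Finset.sum_congr rfl this]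
    simp [Finset.sum_add_distrib, Finset.sum_sub_distrib, ← Finset.mul_sum,
      Finset.sum_const, nsmul_eq_mul, hST, hQT]
  have E2 : ∑ i ∈ T, ∑ j ∈ T, (a i - a j) ^ 2
      = 2 * (T.card : ℝ) * QT - 2 * ST ^ 2 := by
    have inner : ∀ i ∈ T, ∑ j ∈ T, (a i - a j) ^ 2
        = (T.card : ℝ) * a i ^ 2 - 2 * a i * ST + QT := by
      intro i _
      have : ∀ j ∈ T, (a i - a j) ^ 2 = a i ^ 2 - 2 * a i * a j + a j ^ 2 := by
        intro j _; ring
      rw [Finset.sum_congr rfl this]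
      simp [Finset.sum_add_distrib, Finset.sum_sub_distrib, ← Finset.mul_sum,
        Finset.sum_const, nsmul_eq_mul, hST, hQT]
    have hcross : ∑ i ∈ T, 2 * a i * ST = 2 * ST ^ 2 := by
      calc ∑ i ∈ T, 2 * a i * ST = (∑ i ∈ T, 2 * a i) * ST := by
            rw [Finset.sum_mul]
        _ = 2 * (∑ i ∈ T, a i) * ST := by rw [← Finset.mul_sum]
        _ = 2 * ST ^ 2 := by rw [← hST]; ring
    rw [Finset.sum_congr rfl inner, Finset.sum_add_distrib,
      Finset.sum_sub_distrib, ← Finset.mul_sum, Finset.sum_const,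
      nsmul_eq_mul, hcross, ← hQT]
    ring
  have h' := h
  rw [hsum a, hsum (fun i => a i ^ 2)] at h'
  have key : ((n : ℝ) - 1) * (2 * a i0 * a i1 - c)
      = (∑ i ∈ T, (s - a i) ^ 2)
        + (1 / 2) * (∑ i ∈ T, ∑ j ∈ T, (a i - a j) ^ 2) := by
    rw [E1, E2, hcard]
    linear_combination h'
  have hn1 : (0 : ℝ) < (n : ℝ) - 1 := by
    have : (2 : ℝ) ≤ (n : ℝ) := by exact_mod_cast hn
    linarith
  constructor
  · intro hc
    have hz : (∑ i ∈ T, (s - a i) ^ 2)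
        + (1 / 2) * (∑ i ∈ T, ∑ j ∈ T, (a i - a j) ^ 2) = 0 := by
      rw [← key, hc]; ring
    have h1nn : (0 : ℝ) ≤ ∑ i ∈ T, (s - a i) ^ 2 :=
      Finset.sum_nonneg fun i _ => sq_nonneg _
    have h2nn : (0 : ℝ) ≤ ∑ i ∈ T, ∑ j ∈ T, (a i - a j) ^ 2 :=
      Finset.sum_nonneg fun i _ => Finset.sum_nonneg fun j _ => sq_nonneg _
    have h1z : ∑ i ∈ T, (s - a i) ^ 2 = 0 := by linarith
    have heach := (Finset.sum_eq_zero_iff_of_nonneg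
      (fun i _ => sq_nonneg (s - a i))).mp h1z
    intro i hi
    have hiT : i ∈ T := by simp [hT, hi]
    have := heach i hiT
    have : s - a i = 0 := by
      have := sq_eq_zero_iff.mp this
      exact this
    linarith [this]
  · intro hall
    have h1z : ∑ i ∈ T, (s - a i) ^ 2 = 0 := by
      apply Finset.sum_eq_zero
      intro i hi
      have : 2 ≤ (i : ℕ) := by simpa [hT] using hi
      rw [← hall i this]; ring
    have h2z : ∑ i ∈ T, ∑ j ∈ T, (a i - a j) ^ 2 = 0 := by
      apply Finset.sum_eq_zero
      intro i hi
      apply Finset.sum_eq_zero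
      intro j hj
      have hiT : 2 ≤ (i : ℕ) := by simpa [hT] using hi
      have hjT : 2 ≤ (j : ℕ) := by simpa [hT] using hj
      rw [← hall i hiT, ← hall j hjT]; ring
    rw [h1z, h2z] at key
    have : ((n : ℝ) - 1) * (2 * a i0 * a i1 - c) = 0 := by rw [key]; ring
    have := mul_eq_zero.mp this
    rcases this with h0 | h0
    · linarith
    · linarith
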